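/- There exists an absolute constant C > 0 such that the following holds. Let p be an odd prime, G a subgroup of the multiplicative group 𝔽_p*, and g, h : G → 𝔽_p* arbitrary functions. Define f(x,y) = g(x)(h(x)+y) on G × 𝔽_p* and set m = μ(g). Then for all nonempty finite subsets A ⊆ G and B, C ⊆ 𝔽_p*, one has |f(A,B)| · |B+C| ≥ C · min{ |A||B|²|C| / (p m²) , p|B| / m }. -/

import Mathlib

open Finset Pointwise

/-- `muOn G g` is `max_{t ∈ 𝔽_p*} |{x ∈ G : g x = t}|`. -/
def muOn {p : ℕ} [NeZero p] (G : Finset (ZMod p)) (g : ZMod p → ZMod p) : ℕ :=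
  Finset.sup (Finset.univ.filter fun t : ZMod p => t ≠ 0)
    (fun t => (G.filter fun x => g x = t).card)

/-!
Each triple `(a, b, c) ∈ A × B × C` yields an incidence between the point `(b + c, f(a, b))` of
`P = (B + C) × f(A, B)` and the line `y = g(a) x + g(a) (h(a) - c)`. The incidence together with
`a` recovers the triple, and the slope `g(a)` leaves at most `μ(g)` choices for `a`, so
`|A| |B| |C| ≤ μ(g) I(P, L)` for the set `L` of these lines, `|L| ≤ |A| |C|`.

Over `𝔽_q`, Vinh's bound `I(P, L) ≤ |P| |L| / q + √(q |P| |L|)` follows from Cauchy–Schwarz once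
the number of points of `P` on a line is known to have variance at most `|P| q` over all `q²`
non-vertical lines; that holds because two distinct points lie on at most one common line.
Whichever of the two terms dominates gives one of the two terms of the minimum, with `C = 1/4`.
-/

namespace AffineIncidence

variable {F : Type*} [Field F] [DecidableEq F]

/- A non-vertical line is encoded by `(slope, intercept)`: `ℓ` is the line `y = ℓ.1 * x + ℓ.2`. -/

def pointsOn (P : Finset (F × F)) (ℓ : F × F) : Finset (F × F) :=
  {q ∈ P | q.2 = ℓ.1 * q.1 + ℓ.2}

def incidences (P L : Finset (F × F)) : Finset ((F × F) × (F × F)) :=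
  {x ∈ L ×ˢ P | x.2.2 = x.1.1 * x.2.1 + x.1.2}

lemma card_incidences (P L : Finset (F × F)) :
    #(incidences P L) = ∑ ℓ ∈ L, #(pointsOn P ℓ) := by
  simp only [incidences, pointsOn, card_filter, sum_product]

variable [Fintype F]

lemma card_lines_through (q : F × F) :
    #{ℓ : F × F | q.2 = ℓ.1 * q.1 + ℓ.2} = Fintype.card F := by
  have : ({ℓ : F × F | q.2 = ℓ.1 * q.1 + ℓ.2} : Finset (F × F))
      = univ.image fun t => (t, q.2 - t * q.1) := by
    ext ⟨s, c⟩
    simp only [mem_filter, mem_univ, true_and, mem_image, Prod.mk.injEq]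
    constructor
    · intro h
      exact ⟨s, rfl, by rw [h]; ring⟩
    · rintro ⟨t, rfl, rfl⟩
      ring
  rw [this, card_image_of_injective _ fun _ _ hst => congrArg Prod.fst hst, card_univ]

lemma card_lines_through_pair_le_one {q q' : F × F} (hqq' : q ≠ q') :
    #{ℓ : F × F | q.2 = ℓ.1 * q.1 + ℓ.2 ∧ q'.2 = ℓ.1 * q'.1 + ℓ.2} ≤ 1 := by
  refine card_le_one.2 fun ℓ hℓ ℓ' hℓ' => ?_
  simp only [mem_filter, mem_univ, true_and] at hℓ hℓ'
  have hx : q.1 ≠ q'.1 := fun hx => hqq' (Prod.ext hx (by rw [hℓ.1, hℓ.2, hx]))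
  have hslope : ℓ.1 = ℓ'.1 := by
    have : (ℓ.1 - ℓ'.1) * (q.1 - q'.1) = 0 := by
      linear_combination hℓ'.1 - hℓ.1 - hℓ'.2 + hℓ.2
    exact sub_eq_zero.1 ((mul_eq_zero.1 this).resolve_right (sub_ne_zero.2 hx))
  exact Prod.ext hslope (by linear_combination hℓ'.1 - hℓ.1 - q.1 * hslope)

lemma sum_card_pointsOn (P : Finset (F × F)) :
    ∑ ℓ, #(pointsOn P ℓ) = #P * Fintype.card F := by
  simp only [pointsOn, card_filter]
  rw [sum_comm]
  simp only [← card_filter, card_lines_through, sum_const, smul_eq_mul]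

lemma sum_card_pointsOn_sq_le (P : Finset (F × F)) :
    ∑ ℓ, #(pointsOn P ℓ) ^ 2 ≤ #P * Fintype.card F + #P ^ 2 := by
  have hdouble : ∑ ℓ, #(pointsOn P ℓ) ^ 2
      = ∑ q ∈ P, ∑ q' ∈ P, #{ℓ : F × F | q.2 = ℓ.1 * q.1 + ℓ.2 ∧ q'.2 = ℓ.1 * q'.1 + ℓ.2} := by
    simp only [pointsOn, card_filter, sq, sum_mul_sum, ite_zero_mul_ite_zero, mul_one]
    rw [sum_comm]
    exact sum_congr rfl fun _ _ => sum_comm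
  have hrow : ∀ q ∈ P, ∑ q' ∈ P,
      #{ℓ : F × F | q.2 = ℓ.1 * q.1 + ℓ.2 ∧ q'.2 = ℓ.1 * q'.1 + ℓ.2}
        ≤ Fintype.card F + #P := by
    intro q hq
    rw [← add_sum_erase _ _ hq]
    gcongr
    · simp only [and_self, card_lines_through, le_refl]
    · calc _ ≤ ∑ _q' ∈ P.erase q, 1 :=
            sum_le_sum fun q' hq' => card_lines_through_pair_le_one (ne_of_mem_erase hq').symm
        _ ≤ #P := by simpa using card_erase_le
  rw [hdouble]
  calc _ ≤ ∑ _q ∈ P, (Fintype.card F + #P) := sum_le_sum hrow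
    _ = _ := by rw [sum_const, smul_eq_mul]; ring

lemma sum_sq_card_pointsOn_sub_mean_le (P : Finset (F × F)) :
    ∑ ℓ, ((#(pointsOn P ℓ) : ℝ) - #P / Fintype.card F) ^ 2 ≤ #P * Fintype.card F := by
  have hq : (0 : ℝ) < Fintype.card F := Nat.cast_pos.2 Fintype.card_pos
  have hsum : ∑ ℓ, (#(pointsOn P ℓ) : ℝ) = #P * Fintype.card F := by
    exact_mod_cast sum_card_pointsOn P
  have hsum_sq : ∑ ℓ, (#(pointsOn P ℓ) : ℝ) ^ 2 ≤ #P * Fintype.card F + #P ^ 2 := by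
    exact_mod_cast sum_card_pointsOn_sq_le P
  simp only [sub_sq, sum_add_distrib, sum_sub_distrib, ← sum_mul, ← mul_sum, hsum, sum_const,
    card_univ, Fintype.card_prod, nsmul_eq_mul]
  push_cast
  field_simp
  linarith

lemma card_incidences_le (P L : Finset (F × F)) :
    (#(incidences P L) : ℝ) ≤ #P * #L / Fintype.card F + √(Fintype.card F * #P * #L) := by
  set c : ℝ := (#P : ℝ) / Fintype.card F
  have hCS : (∑ ℓ ∈ L, ((#(pointsOn P ℓ) : ℝ) - c)) ^ 2 ≤ #L * (#P * Fintype.card F) :=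
    (sq_sum_le_card_mul_sum_sq).trans <| by
      gcongr
      exact (sum_le_univ_sum_of_nonneg fun _ => sq_nonneg _).trans
        (sum_sq_card_pointsOn_sub_mean_le P)
  have hsplit : (#(incidences P L) : ℝ) = ∑ ℓ ∈ L, ((#(pointsOn P ℓ) : ℝ) - c) + #L * c := by
    rw [card_incidences, sum_sub_distrib, sum_const, nsmul_eq_mul]
    push_cast
    ring
  rw [hsplit]
  have hdev := (le_abs_self _).trans (Real.abs_le_sqrt hCS)
  calc _ ≤ √(#L * (#P * Fintype.card F)) + #L * c := by gcongr
    _ = _ := by rw [mul_div_assoc']; ring_nf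

end AffineIncidence

open AffineIncidence

variable {F : Type*} [Field F] [DecidableEq F]

lemma card_mul_card_mul_card_le_mul_card_incidences {A B C : Finset F} {g h : F → F} {m : ℕ}
    (hg : ∀ a ∈ A, g a ≠ 0) (hfiber : ∀ a ∈ A, #{x ∈ A | g x = g a} ≤ m) :
    #A * #B * #C ≤ m * #(incidences ((B + C) ×ˢ image₂ (fun x y => g x * (h x + y)) A B)
      ((A ×ˢ C).image fun ac => (g ac.1, g ac.1 * (h ac.1 - ac.2)))) := by
  let incidence : F × F × F → (F × F) × (F × F) := fun abc =>
    ((g abc.1, g abc.1 * (h abc.1 - abc.2.2)), (abc.2.1 + abc.2.2, g abc.1 * (h abc.1 + abc.2.1)))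
  have hfiber' : ∀ y ∈ (A ×ˢ B ×ˢ C).image incidence,
      #{abc ∈ A ×ˢ B ×ˢ C | incidence abc = y} ≤ m := by
    simp only [mem_image, mem_product]
    rintro _ ⟨⟨a₀, b₀, c₀⟩, ⟨ha₀, -⟩, rfl⟩
    refine (card_le_card_of_injOn Prod.fst ?_ ?_).trans (hfiber a₀ ha₀)
    · rintro ⟨a, b, c⟩ habc
      simp only [mem_coe, mem_filter, mem_product, incidence, Prod.mk.injEq] at habc
      simpa using ⟨habc.1.1, habc.2.1.1⟩
    · rintro ⟨a, b, c⟩ habc ⟨a', b', c'⟩ habc' (rfl : a = a')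
      simp only [mem_coe, mem_filter, mem_product, incidence, Prod.mk.injEq] at habc habc'
      have hc : c = c' := by
        simpa using mul_left_cancel₀ (hg a habc.1.1) (habc.2.1.2.trans habc'.2.1.2.symm)
      subst hc
      have hb : b = b' := by simpa using habc.2.2.1.trans habc'.2.2.1.symm
      rw [hb]
  have himage : (A ×ˢ B ×ˢ C).image incidence ⊆ incidences
      ((B + C) ×ˢ image₂ (fun x y => g x * (h x + y)) A B)
      ((A ×ˢ C).image fun ac => (g ac.1, g ac.1 * (h ac.1 - ac.2))) := by
    simp only [subset_iff, mem_image, mem_product]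
    rintro _ ⟨⟨a, b, c⟩, ⟨ha, hb, hc⟩, rfl⟩
    simp only [incidences, mem_filter, mem_product, mem_image]
    exact ⟨⟨⟨(a, c), ⟨ha, hc⟩, rfl⟩, add_mem_add hb hc, mem_image₂_of_mem ha hb⟩, by ring⟩
  calc #A * #B * #C = #(A ×ˢ B ×ˢ C) := by rw [card_product, card_product, mul_assoc]
    _ ≤ m * #((A ×ˢ B ×ˢ C).image incidence) := card_le_mul_card_image _ m hfiber'
    _ ≤ _ := by gcongr

lemma min_le_four_mul_of_le_add_sqrt {a b c m p X : ℝ} (ha : 0 < a) (hb : 0 ≤ b) (hc : 0 < c)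
    (hm : 0 < m) (hp : 0 < p) (hX : 0 ≤ X)
    (h : a * b * c ≤ m * (X * (a * c) / p + √(p * X * (a * c)))) :
    min (a * b ^ 2 * c / (p * m ^ 2)) (p * b / m) ≤ 4 * X := by
  have hac : 0 < a * c := mul_pos ha hc
  rcases le_total (√(p * X * (a * c))) (X * (a * c) / p) with hle | hle
  · have h2 : a * b * c ≤ 2 * m * (X * (a * c) / p) := by
      linarith [mul_le_mul_of_nonneg_left hle hm.le]
    have h3 : a * c * (p * b) ≤ a * c * (2 * m * X) :=
      calc a * c * (p * b) = p * (a * b * c) := by ring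
        _ ≤ p * (2 * m * (X * (a * c) / p)) := by gcongr
        _ = a * c * (2 * m * X) := by field_simp
    calc min _ _ ≤ p * b / m := min_le_right _ _
      _ ≤ 2 * X := by rw [div_le_iff₀ hm]; linarith [le_of_mul_le_mul_left h3 hac]
      _ ≤ 4 * X := by linarith
  · have h2 : a * b * c ≤ 2 * m * √(p * X * (a * c)) := by
      linarith [mul_le_mul_of_nonneg_left hle hm.le]
    have hsq : (a * b * c) ^ 2 ≤ 4 * m ^ 2 * (p * X * (a * c)) :=
      calc (a * b * c) ^ 2 ≤ (2 * m * √(p * X * (a * c))) ^ 2 :=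
            pow_le_pow_left₀ (by positivity) h2 2
        _ = _ := by rw [mul_pow, Real.sq_sqrt (by positivity)]; ring
    refine (min_le_left _ _).trans ?_
    rw [div_le_iff₀ (by positivity)]
    nlinarith

lemma card_filter_le_muOn {p : ℕ} [NeZero p] {G A : Finset (ZMod p)} {g : ZMod p → ZMod p}
    (hAG : A ⊆ G) {t : ZMod p} (ht : t ≠ 0) : #{x ∈ A | g x = t} ≤ muOn G g :=
  (card_le_card (filter_subset_filter _ hAG)).trans <|
    le_sup (f := fun t => #{x ∈ G | g x = t}) (by simpa using ht)

theorem hegyvari_hennecart_sum :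
    ∃ C > (0:ℝ),
      ∀ (p : ℕ) [Fact p.Prime], p ≠ 2 →
      ∀ G : Finset (ZMod p),
      (0:ZMod p) ∉ G → (1:ZMod p) ∈ G →
      (∀ x ∈ G, ∀ y ∈ G, x * y ∈ G) → (∀ x ∈ G, x⁻¹ ∈ G) →
      ∀ g h : ZMod p → ZMod p,
      (∀ x ∈ G, g x ≠ 0) → (∀ x ∈ G, h x ≠ 0) →
      ∀ A B Cs : Finset (ZMod p),
      A ⊆ G → A.Nonempty → B.Nonempty → Cs.Nonempty →
      (0:ZMod p) ∉ B → (0:ZMod p) ∉ Cs →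
      C * min ((A.card : ℝ) * (B.card : ℝ) ^ 2 * (Cs.card : ℝ) /
                ((p : ℝ) * ((muOn G g : ℕ) : ℝ) ^ 2))
              ((p : ℝ) * (B.card : ℝ) / ((muOn G g : ℕ) : ℝ)) ≤
        ((Finset.image₂ (fun x y => g x * (h x + y)) A B).card : ℝ) * ((B + Cs).card : ℝ) := by
  refine ⟨1 / 4, by norm_num, fun p _ _ G _ _ _ _ g h hg _ A B Cs hAG hA _ hC _ _ => ?_⟩
  have hgA : ∀ a ∈ A, g a ≠ 0 := fun a ha => hg a (hAG ha)
  have hfiber (a) (ha : a ∈ A) : #{x ∈ A | g x = g a} ≤ muOn G g :=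
    card_filter_le_muOn hAG (hgA a ha)
  obtain ⟨a, ha⟩ := hA
  have hmu : 0 < muOn G g := (hfiber a ha).trans_lt' (card_pos.2 ⟨a, mem_filter.2 ⟨ha, rfl⟩⟩)
  set P := (B + Cs) ×ˢ image₂ (fun x y => g x * (h x + y)) A B
  set L := (A ×ˢ Cs).image fun ac => (g ac.1, g ac.1 * (h ac.1 - ac.2))
  have hcount : (#A * #B * #Cs : ℝ) ≤ muOn G g * #(incidences P L) := by
    exact_mod_cast card_mul_card_mul_card_le_mul_card_incidences hgA hfiber
  have hL : (#L : ℝ) ≤ #A * #Cs := by exact_mod_cast card_image_le.trans (card_product _ _).le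
  have hinc := card_incidences_le P L
  rw [ZMod.card] at hinc
  have key := min_le_four_mul_of_le_add_sqrt (Nat.cast_pos.2 (card_pos.2 ⟨a, ha⟩))
    (Nat.cast_nonneg #B) (Nat.cast_pos.2 hC.card_pos) (Nat.cast_pos.2 hmu)
    (Nat.cast_pos.2 (NeZero.pos p)) (Nat.cast_nonneg #P) <|
      hcount.trans <| by gcongr; exact hinc.trans (by gcongr)
  rw [card_product, Nat.cast_mul] at key
  linarith
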